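/- arXiv:1303.2143 — 8 statements merged into one kernel-verified Lean document; each statement's English description precedes it below -/
import Mathlib

section
/- If w is a word whose set of letters (content) is B, then for every n ∈ ℕ, Subₙ(wⁿ) equals the set of all words over B of length at most n. -/
def Subw {A : Type*} (n : ℕ) (u : List A) : Set (List A) :=
  {w | w.length ≤ n ∧ w.Sublist u}

/-- content of a word -/
def content {A : Type*} (w : List A) : Set A := {a | a ∈ w}

/-- `w ^ n` : n-fold concatenation -/
def listPow {A : Type*} (w : List A) (n : ℕ) : List A := (List.replicate n w).flatten

section ListPow

variable {A : Type*}

theorem listPow_add (w : List A) (m n : ℕ) :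
    listPow w (m + n) = listPow w m ++ listPow w n := by
  simp only [listPow, List.replicate_add, List.flatten_append]

theorem listPow_succ (w : List A) (n : ℕ) :
    listPow w (n + 1) = w ++ listPow w n := by
  simp only [listPow, List.replicate_succ, List.flatten_cons]

theorem mem_of_mem_listPow {w : List A} {n : ℕ} {a : A}
    (h : a ∈ listPow w n) : a ∈ w := by
  simp only [listPow, List.mem_flatten, List.mem_replicate] at h
  obtain ⟨_, ⟨_, rfl⟩, ha⟩ := h
  exact ha

theorem listPow_sublist_listPow (w : List A) {m n : ℕ} (h : m ≤ n) :
    (listPow w m).Sublist (listPow w n) := by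
  obtain ⟨k, rfl⟩ := Nat.exists_eq_add_of_le h
  rw [listPow_add]
  exact List.sublist_append_left _ _

/-- Each letter of `v` is picked from its own copy of `w`. -/
theorem sublist_listPow_length {w v : List A} (hv : ∀ a ∈ v, a ∈ w) :
    v.Sublist (listPow w v.length) := by
  induction v with
  | nil => exact List.nil_sublist _
  | cons a v ih =>
    rw [List.length_cons, listPow_succ, ← List.singleton_append]
    exact (List.singleton_sublist.2 (hv a List.mem_cons_self)).append
      (ih fun b hb => hv b (List.mem_cons_of_mem a hb))

end ListPow

/-- if `c(w) = B`, then `Subₙ(wⁿ)` is the set of words over `B`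
of length at most `n`. -/
theorem sub_pow_eq_words_over_content {A : Type*} (w : List A) (B : Set A)
    (hw : content w = B) (n : ℕ) :
    Subw n (listPow w n) = {v : List A | v.length ≤ n ∧ ∀ a ∈ v, a ∈ B} := by
  subst hw
  ext v
  constructor
  · rintro ⟨hlen, hsub⟩
    exact ⟨hlen, fun a ha => mem_of_mem_listPow (hsub.subset ha)⟩
  · rintro ⟨hlen, hmem⟩
    exact ⟨hlen, (sublist_listPow_length hmem).trans (listPow_sublist_listPow w hlen)⟩
end

section
/- If c(x) ∪ c(z) ⊆ c(y), then for every n, Subₙ(x yⁿ z) equals the set of words over c(y) of length at most n. -/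
/-- if `c(x) ∪ c(z) ⊆ c(y)`, then `Subₙ(x yⁿ z)` is the set of words
over `c(y)` of length at most `n`. -/
theorem sub_xyz_eq {A : Type*} (x y z : List A)
    (h : content x ∪ content z ⊆ content y) (n : ℕ) :
    Subw n (x ++ listPow y n ++ z) =
      {v : List A | v.length ≤ n ∧ ∀ a ∈ v, a ∈ content y} := by
  have key : ∀ (m : ℕ) (v : List A), v.length ≤ m → (∀ a ∈ v, a ∈ y) →
      v.Sublist (listPow y m) := by
    intro m
    induction m with
    | zero => intro v hv _; rw [List.length_eq_zero_iff.mp (Nat.le_zero.mp hv)]; simp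
    | succ m ih =>
      intro v hv hmem
      match v with
      | [] => simp
      | a :: v =>
        have h1 : [a].Sublist y := List.singleton_sublist.mpr (hmem a (by simp))
        have h2 : v.Sublist (listPow y m) := ih v (by simpa using hv)
          (fun b hb => hmem b (by simp [hb]))
        have : (listPow y (m+1)) = y ++ listPow y m := by
          simp [listPow, List.replicate_succ]
        rw [this]
        exact List.Sublist.append h1 h2
  ext v
  constructor
  · rintro ⟨hlen, hsub⟩
    refine ⟨hlen, fun a ha => ?_⟩
    have : a ∈ x ++ listPow y n ++ z := hsub.mem ha
    simp only [List.mem_append] at this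
    rcases this with (hx | hy) | hz
    · exact h (Or.inl hx)
    · simp only [listPow, List.mem_flatten] at hy
      obtain ⟨l, hl, hal⟩ := hy
      rwa [List.eq_of_mem_replicate hl] at hal
    · exact h (Or.inr hz)
  · rintro ⟨hlen, hmem⟩
    refine ⟨hlen, ?_⟩
    exact ((key n v hlen hmem).trans
      (List.sublist_append_right x (listPow y n))).trans
      (List.sublist_append_left _ z)
end

section
/- A language L ⊆ A* is a union of ∼ₙ-equivalence classes for some n if and only if L is a finite Boolean combination of languages of the form A*a₁A*a₂⋯A*aₖA* with aᵢ ∈ A (i.e., L is piecewise testable). -/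
def simn {A : Type*} (n : ℕ) (u v : List A) : Prop := Subw n u = Subw n v

/-- Finite Boolean combinations of the languages `A*a₁A*⋯A*aₖA*`
(the language of words containing `a₁⋯aₖ` as a scattered subword). -/
inductive PTcomb (A : Type*) : Set (List A) → Prop
  | basic (w : List A) : PTcomb A {v | w.Sublist v}
  | compl {L : Set (List A)} : PTcomb A L → PTcomb A Lᶜ
  | union {L M : Set (List A)} : PTcomb A L → PTcomb A M → PTcomb A (L ∪ M)
  | inter {L M : Set (List A)} : PTcomb A L → PTcomb A M → PTcomb A (L ∩ M)

/-!
Each of the finitely many `∼ₙ`-classes is cut out by saying which words of length at most `n`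
are subwords and which are not, so a union of `∼ₙ`-classes is piecewise testable. Conversely,
`A*a₁⋯A*aₖA*` is a union of `∼ₖ`-classes, and unions of `∼ₙ`-classes are closed under the
Boolean operations because `∼ₙ` refines `∼ₘ` for `m ≤ n`.
-/

section

variable {A : Type*}

namespace PTcomb

theorem univ : PTcomb A Set.univ := by
  simpa using PTcomb.basic (A := A) []

theorem empty : PTcomb A ∅ := by
  simpa using (univ (A := A)).compl

theorem biUnion {ι : Type*} {s : Set ι} (hs : s.Finite) {f : ι → Set (List A)}
    (hf : ∀ i ∈ s, PTcomb A (f i)) : PTcomb A (⋃ i ∈ s, f i) := by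
  induction s, hs using Set.Finite.induction_on with
  | empty => simpa using empty
  | @insert a s _ _ ih =>
    rw [Set.biUnion_insert]
    exact (hf a (s.mem_insert a)).union (ih fun i hi => hf i (Set.mem_insert_of_mem a hi))

theorem biInter {ι : Type*} {s : Set ι} (hs : s.Finite) {f : ι → Set (List A)}
    (hf : ∀ i ∈ s, PTcomb A (f i)) : PTcomb A (⋂ i ∈ s, f i) := by
  induction s, hs using Set.Finite.induction_on with
  | empty => simpa using univ
  | @insert a s _ _ ih =>
    rw [Set.biInter_insert]
    exact (hf a (s.mem_insert a)).inter (ih fun i hi => hf i (Set.mem_insert_of_mem a hi))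

end PTcomb

theorem simn.mono {m n : ℕ} (hmn : m ≤ n) {u v : List A} (h : simn n u v) : simn m u v := by
  have restrict : ∀ w : List A, Subw m w = {x ∈ Subw n w | x.length ≤ m} := fun w => by
    ext x
    exact ⟨fun hx => ⟨⟨hx.1.trans hmn, hx.2⟩, hx.1⟩, fun hx => ⟨hx.2, hx.1.2⟩⟩
  unfold simn at h ⊢
  rw [restrict u, restrict v, h]

theorem finite_range_subw [Finite A] (n : ℕ) : (Set.range (Subw (A := A) n)).Finite :=
  (List.finite_length_le A n).finite_subsets.subset <| by
    rintro _ ⟨u, rfl⟩ w hw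
    exact hw.1

theorem PTcomb.setOf_subw_eq [Finite A] (n : ℕ) (u : List A) :
    PTcomb A {v | Subw n v = Subw n u} := by
  have hclass : {v | Subw n v = Subw n u} =
      (⋂ w ∈ Subw n u, {v | w.Sublist v}) ∩
        ⋂ w ∈ {w : List A | w.length ≤ n} \ Subw n u, {v | w.Sublist v}ᶜ := by
    ext v
    simp only [Set.mem_ofPred_eq, Set.mem_inter_iff, Set.mem_iInter, Set.mem_sdiff,
      Set.mem_compl_iff, and_imp]
    refine ⟨fun h => ⟨fun w hw => (h ▸ hw : w ∈ Subw n v).2,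
      fun w hlen hnot hsub => hnot (h ▸ ⟨hlen, hsub⟩)⟩, fun ⟨hsub, hnsub⟩ => ?_⟩
    ext w
    exact ⟨fun hw => by_contra fun hnot => hnsub w hw.1 hnot hw.2,
      fun hw => ⟨hw.1, hsub w hw⟩⟩
  have hfin : (Subw n u).Finite := (List.finite_length_le A n).subset fun w hw => hw.1
  rw [hclass]
  exact (PTcomb.biInter hfin fun w _ => .basic w).inter
    (PTcomb.biInter (List.finite_length_le A n).sdiff fun w _ => (PTcomb.basic w).compl)

def SimnSaturated (n : ℕ) (L : Set (List A)) : Prop :=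
  ∀ u v : List A, u ∈ L → simn n u v → v ∈ L

namespace SimnSaturated

theorem sublist (w : List A) : SimnSaturated w.length {v | w.Sublist v} := fun _ _ hu huv =>
  ((Set.ext_iff.mp huv w).mp ⟨le_rfl, hu⟩).2

theorem mono {m n : ℕ} (hmn : m ≤ n) {L : Set (List A)} (hL : SimnSaturated m L) :
    SimnSaturated n L := fun u v hu huv => hL u v hu (huv.mono hmn)

theorem compl {n : ℕ} {L : Set (List A)} (hL : SimnSaturated n L) : SimnSaturated n Lᶜ :=
  fun u v hu huv hv => hu (hL v u hv huv.symm)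

theorem union {n : ℕ} {L M : Set (List A)} (hL : SimnSaturated n L) (hM : SimnSaturated n M) :
    SimnSaturated n (L ∪ M) := fun u v hu huv =>
  hu.imp (hL u v · huv) (hM u v · huv)

theorem inter {n : ℕ} {L M : Set (List A)} (hL : SimnSaturated n L) (hM : SimnSaturated n M) :
    SimnSaturated n (L ∩ M) := fun u v hu huv =>
  ⟨hL u v hu.1 huv, hM u v hu.2 huv⟩

theorem eq_biUnion_setOf_subw_eq {n : ℕ} {L : Set (List A)} (hL : SimnSaturated n L) :
    L = ⋃ S ∈ Subw n '' L, {v | Subw n v = S} := by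
  ext v
  simp only [Set.mem_iUnion, Set.mem_image, Set.mem_ofPred_eq, exists_prop]
  exact ⟨fun hv => ⟨_, ⟨v, hv, rfl⟩, rfl⟩,
    fun ⟨_, ⟨u, hu, hS⟩, hv⟩ => hL u v hu (hS.trans hv.symm)⟩

theorem ptcomb [Finite A] {n : ℕ} {L : Set (List A)} (hL : SimnSaturated n L) : PTcomb A L := by
  rw [hL.eq_biUnion_setOf_subw_eq]
  refine PTcomb.biUnion ((finite_range_subw n).subset (Set.image_subset_range _ _)) ?_
  rintro _ ⟨u, _, rfl⟩
  exact PTcomb.setOf_subw_eq n u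

end SimnSaturated

theorem PTcomb.exists_simnSaturated {L : Set (List A)} (hL : PTcomb A L) :
    ∃ n, SimnSaturated n L := by
  induction hL with
  | basic w => exact ⟨w.length, .sublist w⟩
  | compl _ ih =>
    obtain ⟨n, hn⟩ := ih
    exact ⟨n, hn.compl⟩
  | union _ _ ihL ihM =>
    obtain ⟨m, hm⟩ := ihL
    obtain ⟨k, hk⟩ := ihM
    exact ⟨max m k, (hm.mono (le_max_left m k)).union (hk.mono (le_max_right m k))⟩
  | inter _ _ ihL ihM =>
    obtain ⟨m, hm⟩ := ihL
    obtain ⟨k, hk⟩ := ihM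
    exact ⟨max m k, (hm.mono (le_max_left m k)).inter (hk.mono (le_max_right m k))⟩

end

/-- `L` is a union of `∼ₙ`-classes for some `n` iff `L` is a finite
Boolean combination of languages of the form `A*a₁A*a₂⋯A*aₖA*` (piecewise testable). -/
theorem union_of_simn_classes_iff_PT {A : Type*} [Fintype A] (L : Set (List A)) :
    (∃ n : ℕ, ∀ u v : List A, u ∈ L → simn n u v → v ∈ L) ↔ PTcomb A L :=
  ⟨fun ⟨_, hn⟩ => SimnSaturated.ptcomb hn, PTcomb.exists_simnSaturated⟩
end

section
/- Let u₀,…,u_p ∈ A* and nonempty B₁,…,B_p ⊆ A. Suppose xᵢ, yᵢ, zᵢ and xᵢ', yᵢ', zᵢ' (1 ≤ i ≤ p) satisfy c(xᵢ) ∪ c(zᵢ) ⊆ c(yᵢ) = Bᵢ and c(xᵢ') ∪ c(zᵢ') ⊆ c(yᵢ') = Bᵢ. Then for every n, u₀(x₁y₁ⁿz₁)u₁⋯u_{p−1}(x_p y_pⁿ z_p)u_p ∼ₙ u₀(x₁'y₁'ⁿz₁')u₁⋯u_{p−1}(x_p' y_p'ⁿ z_p')u_p. -/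
/-- the word `u₀(x₁y₁ⁿz₁)u₁⋯u_{p−1}(x_p y_pⁿ z_p)u_p` -/
def bigWord {A : Type*} (p : ℕ) (u : Fin (p + 1) → List A)
    (x y z : Fin p → List A) (n : ℕ) : List A :=
  (List.ofFn fun i : Fin p =>
    u i.castSucc ++ x i ++ listPow (y i) n ++ z i).flatten ++ u (Fin.last p)

lemma Subw_append {A : Type*} (n : ℕ) (u v : List A) :
    Subw n (u ++ v) =
      {w | w.length ≤ n ∧ ∃ w1 w2, w = w1 ++ w2 ∧ w1 ∈ Subw n u ∧ w2 ∈ Subw n v} := by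
  ext w
  constructor
  · rintro ⟨hl, hs⟩
    obtain ⟨w1, w2, rfl, h1, h2⟩ := List.sublist_append_iff.mp hs
    refine ⟨hl, w1, w2, rfl, ⟨?_, h1⟩, ⟨?_, h2⟩⟩
    · exact le_trans (by simp) hl
    · exact le_trans (by simp) hl
  · rintro ⟨hl, w1, w2, rfl, ⟨_, h1⟩, ⟨_, h2⟩⟩
    exact ⟨hl, h1.append h2⟩

lemma simn_append {A : Type*} {n : ℕ} {u u' v v' : List A}
    (h1 : simn n u u') (h2 : simn n v v') : simn n (u ++ v) (u' ++ v') := by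
  unfold simn at *
  rw [Subw_append, Subw_append, h1, h2]

lemma simn_refl {A : Type*} (n : ℕ) (u : List A) : simn n u u := rfl

lemma sublist_listPow {A : Type*} {y : List A} :
    ∀ {n : ℕ} {w : List A}, w.length ≤ n → (∀ a ∈ w, a ∈ y) → w.Sublist (listPow y n) := by
  intro n
  induction n with
  | zero =>
    intro w hw _
    simp at hw
    simp [hw]
  | succ n ih =>
    intro w hw hmem
    match w with
    | [] => simp
    | a :: t =>
      have : listPow y (n + 1) = y ++ listPow y n := by
        simp [listPow, List.replicate_succ]
      rw [this]
      have ha : [a].Sublist y := List.singleton_sublist.mpr (hmem a (by simp))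
      have ht : t.Sublist (listPow y n) := by
        refine ih ?_ (fun b hb => hmem b (by simp [hb]))
        simpa using Nat.succ_le_succ_iff.mp hw
      exact ha.append ht

lemma Subw_xyz {A : Type*} {x y z : List A} {B : Set A} (n : ℕ)
    (hxz : content x ∪ content z ⊆ content y) (hy : content y = B) :
    Subw n (x ++ (listPow y n ++ z)) = {w | w.length ≤ n ∧ ∀ a ∈ w, a ∈ B} := by
  ext w
  constructor
  · rintro ⟨hl, hs⟩
    refine ⟨hl, fun a ha => ?_⟩
    have := hs.mem ha
    rw [← hy]
    simp only [List.mem_append] at this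
    rcases this with hx | hp | hz
    · exact hxz (Or.inl hx)
    · simp only [listPow, List.mem_flatten] at hp
      obtain ⟨l, hl', hal⟩ := hp
      rw [List.eq_of_mem_replicate hl'] at hal
      exact hal
    · exact hxz (Or.inr hz)
  · rintro ⟨hl, hmem⟩
    refine ⟨hl, ?_⟩
    have : w.Sublist (listPow y n) :=
      sublist_listPow hl (fun a ha => by rw [← hy] at hmem; exact hmem a ha)
    exact this.trans ((List.sublist_append_left (listPow y n) z).trans
      (List.sublist_append_right x _))

lemma simn_flatten {A : Type*} {n : ℕ} :
    ∀ {L L' : List (List A)}, List.Forall₂ (simn n) L L' →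
      simn n L.flatten L'.flatten := by
  intro L L' h
  induction h with
  | nil => rfl
  | cons h _ ih =>
    simp only [List.flatten_cons]
    exact simn_append h ih

theorem big_product_simn {A : Type*} (p : ℕ) (u : Fin (p + 1) → List A)
    (B : Fin p → Set A) (hB : ∀ i, (B i).Nonempty)
    (x y z x' y' z' : Fin p → List A)
    (h : ∀ i, content (x i) ∪ content (z i) ⊆ content (y i) ∧ content (y i) = B i)
    (h' : ∀ i, content (x' i) ∪ content (z' i) ⊆ content (y' i) ∧ content (y' i) = B i)
    (n : ℕ) :
    simn n (bigWord p u x y z n) (bigWord p u x' y' z' n) := by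
  unfold bigWord
  refine simn_append (simn_flatten ?_) (simn_refl _ _)
  rw [List.forall₂_iff_get]
  refine ⟨by simp, fun i h1 h2 => ?_⟩
  simp only [List.get_ofFn]
  set j : Fin p := ⟨i, by simpa using h1⟩
  show simn n (u j.castSucc ++ x j ++ listPow (y j) n ++ z j)
      (u j.castSucc ++ x' j ++ listPow (y' j) n ++ z' j)
  simp only [List.append_assoc]
  refine simn_append (simn_refl _ _) ?_
  unfold simn
  rw [Subw_xyz n (h j).1 (h j).2, Subw_xyz n (h' j).1 (h' j).2]
end

section
/- Every word w ∈ A⁺ over a finite alphabet A admits a factorization tree, with respect to the content morphism c : A⁺ → 2^A (mapping a word to its set of letters), of height at most 3·2^|A|, such that every internal node either has exactly 2 children, or has children whose labels all have the same content (note every element of the semigroup (2^A, ∪) is idempotent). -/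
/-- `RamseyTree h w` : the nonempty word `w` admits a factorization tree of height
at most `h`, Ramseyan for the content morphism `c : A⁺ → 2^A`: leaves are single
letters, and every internal node either has exactly `2` children, or has at least
`2` children whose labels all have the same content (all elements of `(2^A, ∪)`
are idempotent). -/
inductive RamseyTree (A : Type*) : ℕ → List A → Prop
  | leaf (a : A) (h : ℕ) : RamseyTree A h [a]
  | node2 {h : ℕ} {u v : List A} :
      RamseyTree A h u → RamseyTree A h v → RamseyTree A (h + 1) (u ++ v)
  | nodeIdem {h : ℕ} (ws : List (List A)) (hlen : 2 ≤ ws.length)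
      (hcontent : ∀ u ∈ ws, ∀ v ∈ ws, content u = content v)
      (hsub : ∀ u ∈ ws, RamseyTree A h u) :
      RamseyTree A (h + 1) ws.flatten

/-!
Induction on the size of the content. A word `w` with content `c` is cut greedily from the
left into blocks `u₁ ⋯ uₘ r`, each `uᵢ` being a shortest factor with content `c`, and `r` the
leftover with smaller content. Each block is `u'ᵢ a` with `u'ᵢ` of smaller content, so it has a
tree of height `h + 1` (binary node); all blocks share the content `c`, so one idempotent node
joins them at height `h + 2`; a last binary node attaches `r` at height `h + 3`. This gives
height `3 |c| ≤ 3 |A| ≤ 3 · 2^|A|`.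
-/

namespace RamseyTree

variable {A : Type*}

theorem mono {h h' : ℕ} {w : List A} (hle : h ≤ h') (t : RamseyTree A h w) :
    RamseyTree A h' w := by
  induction t generalizing h' with
  | leaf a h => exact .leaf a h'
  | node2 _ _ ihu ihv =>
      obtain ⟨h', rfl⟩ := Nat.exists_eq_add_of_lt hle
      exact .node2 (ihu (by omega)) (ihv (by omega))
  | nodeIdem ws hlen hcontent _ ih =>
      obtain ⟨h', rfl⟩ := Nat.exists_eq_add_of_lt hle
      exact .nodeIdem ws hlen hcontent fun u hu => ih u hu (by omega)

theorem flatten {h : ℕ} {s : Set A} {ws : List (List A)} (hne : ws ≠ [])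
    (hcontent : ∀ u ∈ ws, content u = s) (hsub : ∀ u ∈ ws, RamseyTree A h u) :
    RamseyTree A (h + 1) ws.flatten := by
  rcases ws with _ | ⟨u, _ | ⟨v, ws⟩⟩
  · exact absurd rfl hne
  · simpa using (hsub u (by simp)).mono (Nat.le_succ h)
  · exact .nodeIdem _ (by simp)
      (fun u hu v hv => (hcontent u hu).trans (hcontent v hv).symm) hsub

section Step

variable [DecidableEq A] {h : ℕ} {c : Finset A}
  (hsmall : ∀ w : List A, w ≠ [] → w.toFinset ⊂ c → RamseyTree A h w)
include hsmall

theorem append_singleton {r : List A} (hr : r.toFinset ⊂ c) (a : A) :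
    RamseyTree A (h + 1) (r ++ [a]) := by
  rcases eq_or_ne r [] with rfl | hne
  · exact .leaf a _
  · exact .node2 (hsmall r hne hr) (.leaf a h)

theorem exists_blocks {w : List A} (hw : w.toFinset ⊆ c) :
    ∃ (us : List (List A)) (r : List A), w = us.flatten ++ r ∧ (∀ u ∈ us, content u = c ∧ RamseyTree A (h + 1) u) ∧
      (r = [] ∨ r.toFinset ⊂ c) := by
  induction w using List.reverseRecOn with
  | nil => exact ⟨[], [], rfl, by simp, Or.inl rfl⟩
  | append_singleton w a ih =>
    rw [List.toFinset_append, Finset.union_subset_iff] at hw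
    obtain ⟨us, r, rfl, hus, hr⟩ := ih hw.1
    have ha : a ∈ c := hw.2 (by simp)
    have hra : (r ++ [a]).toFinset ⊆ c := by
      rw [List.toFinset_append, Finset.union_subset_iff]
      exact ⟨fun x hx => hw.1 (by simp_all), hw.2⟩
    by_cases hfull : (r ++ [a]).toFinset = c
    · have hr' : r.toFinset ⊂ c := hr.elim (fun hr => by simpa [hr] using ⟨a, ha⟩) id
      refine ⟨us ++ [r ++ [a]], [], by simp, ?_, Or.inl rfl⟩
      simp only [List.mem_append, List.mem_singleton]
      rintro u (hu | rfl)
      · exact hus u hu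
      · exact ⟨by rw [← hfull, List.coe_toFinset]; rfl, append_singleton hsmall hr' a⟩
    · exact ⟨us, r ++ [a], by simp, hus, Or.inr (ssubset_of_subset_of_ne hra hfull)⟩

theorem of_toFinset_subset {w : List A} (hw : w ≠ []) (hwc : w.toFinset ⊆ c) :
    RamseyTree A (h + 3) w := by
  obtain ⟨us, r, rfl, hus, hr⟩ := exists_blocks hsmall hwc
  rcases eq_or_ne us [] with rfl | hus_ne
  · have hr_ne : r ≠ [] := by simpa using hw
    exact (hsmall r hr_ne (hr.resolve_left hr_ne)).mono (by omega)
  · have hflat : RamseyTree A (h + 2) us.flatten :=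
      flatten hus_ne (fun u hu => (hus u hu).1) (fun u hu => (hus u hu).2)
    rcases eq_or_ne r [] with rfl | hr_ne
    · simpa using hflat.mono (by omega)
    · exact .node2 hflat ((hsmall r hr_ne (hr.resolve_left hr_ne)).mono (by omega))

end Step

theorem of_card_toFinset_le [DecidableEq A] :
    ∀ (k : ℕ) (w : List A), w ≠ [] → w.toFinset.card ≤ k → RamseyTree A (3 * k) w
  | 0, w, hw, hk => absurd hk (by simpa [Finset.card_pos] using hw)
  | k + 1, w, hw, _ =>
      of_toFinset_subset (fun v hv hvw =>
        of_card_toFinset_le k v hv (by have := Finset.card_lt_card hvw; omega)) hw le_rfl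

end RamseyTree

/-- Simon's factorization forest theorem for the content morphism:
every nonempty word over a finite alphabet `A` admits a Ramseyan factorization
tree of height at most `3·2^|A|`. -/
theorem simon_factorization_content {A : Type*} [Fintype A] (w : List A)
    (hw : w ≠ []) : RamseyTree A (3 * 2 ^ Fintype.card A) w := by
  classical
  exact (RamseyTree.of_card_toFinset_le _ w hw (Finset.card_le_univ _)).mono
    (Nat.mul_le_mul_left 3 Nat.lt_two_pow_self.le)
end

section
/- If (u⃗, B⃗) and (t⃗, C⃗) are proper factorization patterns, (vₙ)ₙ is (u⃗,B⃗)-adequate, (wₙ)ₙ is (t⃗,C⃗)-adequate, and vₙ ∼ₙ wₙ for every n, then u⃗ = t⃗ and B⃗ = C⃗. -/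
def exactLang {A : Type*} (B : Set A) : Language A := {w | content w = B}

/-- `patternLang u B n = u₀(B₁!)ⁿu₁⋯u_{p−1}(B_p!)ⁿu_p`. -/
def patternLang {A : Type*} : List (List A) → List (Set A) → ℕ → Language A
  | [u0], [], _ => {u0}
  | u0 :: us, b :: bs, n => {u0} * (exactLang b) ^ n * patternLang us bs n
  | _, _, _ => (0 : Language A)

/-- A factorization pattern `(u⃗, B⃗)` is proper: for all `i`,
`last(uᵢ) ∉ B_{i+1}`, `first(u_{i+1}) ∉ B_{i+1}` (1-indexed: `last(u_{i-1}) ∉ Bᵢ`,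
`first(uᵢ) ∉ Bᵢ`), and if an interior `uᵢ` is empty then the two surrounding
alphabets are incomparable. -/
def Proper {A : Type*} (u : List (List A)) (B : List (Set A)) : Prop :=
  (∀ i < B.length, ∀ a ∈ (u.getD i []).getLast?, a ∉ B.getD i ∅) ∧
  (∀ i < B.length, ∀ a ∈ (u.getD (i + 1) []).head?, a ∉ B.getD i ∅) ∧
  (∀ i, i + 1 < B.length → u.getD (i + 1) [] = [] →
    ¬ B.getD i ∅ ⊆ B.getD (i + 1) ∅ ∧ ¬ B.getD (i + 1) ∅ ⊆ B.getD i ∅)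

/-!
A word `s` with `|s| ≤ n` is a subword of a word of `u₀(B₁!)ⁿu₁⋯(B_p!)ⁿu_p` iff it lies in the
product `u₀' B₁* u₁' ⋯ B_p* u_p'`, where `uᵢ'` makes every letter of `uᵢ` optional. Hence
`vₙ ∼ₙ wₙ` for all `n` says that the two patterns give the same product. Properness makes the
sequence of factors reduced, and a reduced product determines its factors: the letters `a` with
`a K ⊆ K` are exactly those of a leading `B*` (none for a leading optional letter), two different
leading optional letters would force one of them to be absorbed by the rest, and once the first
factor is known the rest of the product is recovered from `K`.
-/

namespace FactorizationPattern

open List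

variable {A : Type*}

inductive Atom (A : Type*)
  | letter (a : A)
  | star (b : Set A)

namespace Atom

def lang : Atom A → Language A
  | letter a => {[], [a]}
  | star b => {s | ∀ x ∈ s, x ∈ b}

def letters : Atom A → Set A
  | letter a => {a}
  | star b => b

def absorbs : Atom A → Set A
  | letter _ => ∅
  | star b => b

/-- For adjacent factors of a proper pattern: a letter next to `B*` is outside `B`, and two
adjacent stars have incomparable alphabets. -/
def Compatible (x y : Atom A) : Prop :=
  ¬ x.letters ⊆ y.absorbs ∧ ¬ y.letters ⊆ x.absorbs

lemma mem_lang_letter {a : A} {s : List A} : s ∈ (letter a).lang ↔ s = [] ∨ s = [a] := Iff.rfl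

lemma mem_lang_star {b : Set A} {s : List A} : s ∈ (star b).lang ↔ ∀ x ∈ s, x ∈ b := Iff.rfl

lemma nil_mem_lang (x : Atom A) : [] ∈ x.lang := by
  cases x <;> simp [mem_lang_letter, mem_lang_star]

lemma singleton_mem_lang {x : Atom A} {e : A} (he : e ∈ x.letters) : [e] ∈ x.lang := by
  cases x <;> simp_all [mem_lang_letter, mem_lang_star, letters]

lemma mem_lang_of_sublist {x : Atom A} {s t : List A} (hst : s <+ t) (ht : t ∈ x.lang) :
    s ∈ x.lang := by
  cases x with
  | letter a =>
    rcases ht with rfl | rfl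
    · exact .inl (sublist_nil.1 hst)
    · exact (sublist_singleton.1 hst).imp id id
  | star b => exact fun y hy => ht y (hst.subset hy)

lemma cons_mem_lang {x : Atom A} {a : A} {s : List A} (ha : a ∈ x.absorbs) (hs : s ∈ x.lang) :
    a :: s ∈ x.lang := by
  cases x with
  | letter => exact ha.elim
  | star b => exact forall_mem_cons.2 ⟨ha, hs⟩

lemma mem_letters_of_cons_mem_lang {x : Atom A} {a : A} {s : List A} (h : a :: s ∈ x.lang) :
    a ∈ x.letters := by
  cases x with
  | letter b => simp_all [mem_lang_letter, letters]
  | star b => exact h a mem_cons_self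

lemma eq_nil_of_cons_mem_lang {x : Atom A} {a : A} {s : List A} (ha : a ∉ x.absorbs)
    (h : a :: s ∈ x.lang) : s = [] := by
  cases x with
  | letter b => simp_all [mem_lang_letter]
  | star b => exact (ha (h a mem_cons_self)).elim

end Atom

open Atom

def prodLang (L : List (Atom A)) : Language A := (L.map Atom.lang).prod

lemma mem_prodLang_nil {s : List A} : s ∈ prodLang ([] : List (Atom A)) ↔ s = [] :=
  Language.mem_one s

lemma prodLang_cons (x : Atom A) (L : List (Atom A)) : prodLang (x :: L) = x.lang * prodLang L :=
  prod_cons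

lemma mem_prodLang_cons {x : Atom A} {L : List (Atom A)} {s : List A} :
    s ∈ prodLang (x :: L) ↔ ∃ s₁ ∈ x.lang, ∃ s₂ ∈ prodLang L, s₁ ++ s₂ = s := by
  rw [prodLang_cons, Language.mem_mul]

lemma prodLang_append (L M : List (Atom A)) : prodLang (L ++ M) = prodLang L * prodLang M := by
  simp [prodLang]

lemma nil_mem_prodLang : ∀ L : List (Atom A), [] ∈ prodLang L
  | [] => rfl
  | x :: L => mem_prodLang_cons.2 ⟨[], x.nil_mem_lang, [], nil_mem_prodLang L, rfl⟩

lemma mem_prodLang_of_sublist : ∀ {L : List (Atom A)} {s t : List A},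
    s <+ t → t ∈ prodLang L → s ∈ prodLang L
  | [], _, _, hst, ht => by rw [mem_prodLang_nil] at ht ⊢; subst ht; exact sublist_nil.1 hst
  | x :: L, s, _, hst, ht => by
    obtain ⟨t₁, ht₁, t₂, ht₂, rfl⟩ := mem_prodLang_cons.1 ht
    obtain ⟨s₁, s₂, rfl, hs₁, hs₂⟩ := sublist_append_iff.1 hst
    exact mem_prodLang_cons.2
      ⟨s₁, mem_lang_of_sublist hs₁ ht₁, s₂, mem_prodLang_of_sublist hs₂ ht₂, rfl⟩

lemma mem_prodLang_cons_of_mem {x : Atom A} {L : List (Atom A)} {s : List A}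
    (hs : s ∈ prodLang L) : s ∈ prodLang (x :: L) :=
  mem_prodLang_cons.2 ⟨[], x.nil_mem_lang, s, hs, rfl⟩

lemma cons_mem_prodLang_of_mem_letters {x : Atom A} {L : List (Atom A)} {e : A} {s : List A}
    (he : e ∈ x.letters) (hs : s ∈ prodLang L) : e :: s ∈ prodLang (x :: L) :=
  mem_prodLang_cons.2 ⟨[e], singleton_mem_lang he, s, hs, rfl⟩

lemma cons_mem_prodLang_of_mem_absorbs {x : Atom A} {L : List (Atom A)} {a : A} {s : List A}
    (ha : a ∈ x.absorbs) (hs : s ∈ prodLang (x :: L)) : a :: s ∈ prodLang (x :: L) := by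
  obtain ⟨s₁, hs₁, s₂, hs₂, rfl⟩ := mem_prodLang_cons.1 hs
  exact mem_prodLang_cons.2 ⟨a :: s₁, cons_mem_lang ha hs₁, s₂, hs₂, rfl⟩

lemma cons_mem_prodLang_of_notMem_letters {x : Atom A} {L : List (Atom A)} {a : A} {s : List A}
    (ha : a ∉ x.letters) (h : a :: s ∈ prodLang (x :: L)) : a :: s ∈ prodLang L := by
  obtain ⟨s₁, hs₁, s₂, hs₂, hs⟩ := mem_prodLang_cons.1 h
  cases s₁ with
  | nil => rwa [← hs]
  | cons b s₁ =>
    obtain ⟨rfl, -⟩ := cons_eq_cons.1 hs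
    exact (ha (mem_letters_of_cons_mem_lang hs₁)).elim

lemma mem_prodLang_of_notMem_absorbs {x : Atom A} {L : List (Atom A)} {a : A} {s : List A}
    (ha : a ∉ x.absorbs) (h : a :: s ∈ prodLang (x :: L)) : s ∈ prodLang L := by
  obtain ⟨s₁, hs₁, s₂, hs₂, hs⟩ := mem_prodLang_cons.1 h
  cases s₁ with
  | nil => exact mem_prodLang_of_sublist (sublist_cons_self a s) (by rwa [← hs])
  | cons b s₁ =>
    obtain ⟨rfl, rfl⟩ := cons_eq_cons.1 hs
    rwa [eq_nil_of_cons_mem_lang ha hs₁]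

lemma exists_sublist_cons_mem_prodLang {x : Atom A} {L : List (Atom A)} {e : A} {s : List A}
    (he : e ∈ x.letters) (hs : s ∈ prodLang (x :: L)) :
    ∃ t, s <+ e :: t ∧ e :: t ∈ prodLang (x :: L) := by
  cases x with
  | letter a =>
    obtain ⟨s₁, hs₁ | hs₁, s₂, hs₂, rfl⟩ := mem_prodLang_cons.1 hs <;> subst hs₁
    · exact ⟨s₂, sublist_cons_self e s₂, cons_mem_prodLang_of_mem_letters he hs₂⟩
    · exact ⟨s₂, by simp_all [letters], cons_mem_prodLang_of_mem_letters he hs₂⟩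
  | star b => exact ⟨s, sublist_cons_self e s, cons_mem_prodLang_of_mem_absorbs he hs⟩

def headAbsorbs : List (Atom A) → Set A
  | [] => ∅
  | x :: _ => x.absorbs

def Reduced (L : List (Atom A)) : Prop :=
  L.IsChain Compatible ∧ ∀ x ∈ L, x.letters.Nonempty

lemma Reduced.tail {x : Atom A} {L : List (Atom A)} (h : Reduced (x :: L)) : Reduced L :=
  ⟨h.1.tail, fun y hy => h.2 y (mem_cons_of_mem x hy)⟩

lemma Reduced.exists_mem_letters_notMem_headAbsorbs {x : Atom A} {L : List (Atom A)}
    (h : Reduced (x :: L)) : ∃ e ∈ x.letters, e ∉ headAbsorbs L := by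
  cases L with
  | nil => simpa [headAbsorbs, Set.Nonempty] using h.2 x mem_cons_self
  | cons y L => exact Set.not_subset.1 (isChain_cons_cons.1 h.1).1.1

/-- The witness takes from each factor a letter that the next factor does not absorb. -/
lemma Reduced.exists_cons_notMem_prodLang : ∀ {L : List (Atom A)}, Reduced L →
    ∃ w ∈ prodLang L, ∀ a ∉ headAbsorbs L, a :: w ∉ prodLang L
  | [], _ => ⟨[], rfl, fun a _ h => by simp [mem_prodLang_nil] at h⟩
  | x :: L, h => by
    obtain ⟨e, hex, heL⟩ := h.exists_mem_letters_notMem_headAbsorbs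
    obtain ⟨w, hw, hwL⟩ := h.tail.exists_cons_notMem_prodLang
    exact ⟨e :: w, cons_mem_prodLang_of_mem_letters hex hw,
      fun a ha haw => hwL e heL (mem_prodLang_of_notMem_absorbs ha haw)⟩

def stableLetters (K : Language A) : Set A := {a | ∀ w ∈ K, a :: w ∈ K}

lemma Reduced.stableLetters_prodLang_eq {L : List (Atom A)} (h : Reduced L) :
    stableLetters (prodLang L) = headAbsorbs L := by
  ext a
  refine ⟨fun ha => ?_, fun ha w hw => ?_⟩
  · obtain ⟨w, hw, hwL⟩ := h.exists_cons_notMem_prodLang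
    by_contra haL
    exact hwL a haL (ha w hw)
  · cases L with
    | nil => exact ha.elim
    | cons x L => exact cons_mem_prodLang_of_mem_absorbs ha hw

lemma Reduced.prodLang_ne_one {x : Atom A} {L : List (Atom A)} (h : Reduced (x :: L)) :
    prodLang (x :: L) ≠ 1 := by
  intro h1
  obtain ⟨e, he, -⟩ := h.exists_mem_letters_notMem_headAbsorbs
  have := cons_mem_prodLang_of_mem_letters he (nil_mem_prodLang L)
  rw [h1, Language.mem_one] at this
  exact cons_ne_nil e [] this

lemma Reduced.letter_eq_of_prodLang_eq {a b : A} {L M : List (Atom A)}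
    (hL : Reduced (letter a :: L)) (h : prodLang (letter a :: L) = prodLang (letter b :: M)) :
    a = b := by
  by_contra hab
  have hLM : ∀ s ∈ prodLang L, a :: s ∈ prodLang M := fun s hs =>
    cons_mem_prodLang_of_notMem_letters (x := letter b) hab
      (h ▸ cons_mem_prodLang_of_mem_letters rfl hs)
  have hML : ∀ s ∈ prodLang M, s ∈ prodLang L := fun s hs =>
    mem_prodLang_of_sublist (sublist_cons_self b s) (cons_mem_prodLang_of_notMem_letters
      (x := letter a) (Ne.symm hab) (h.symm ▸ cons_mem_prodLang_of_mem_letters rfl hs))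
  obtain ⟨e, rfl, heL⟩ := hL.exists_mem_letters_notMem_headAbsorbs
  exact heL (hL.tail.stableLetters_prodLang_eq ▸ fun s hs => hML _ (hLM s hs))

lemma Reduced.head_eq_of_prodLang_eq {x y : Atom A} {L M : List (Atom A)}
    (hL : Reduced (x :: L)) (hM : Reduced (y :: M)) (h : prodLang (x :: L) = prodLang (y :: M)) :
    x = y := by
  have habs : x.absorbs = y.absorbs := by
    have := congrArg stableLetters h
    rwa [hL.stableLetters_prodLang_eq, hM.stableLetters_prodLang_eq] at this
  cases x with
  | letter a =>
    cases y with
    | letter b => rw [hL.letter_eq_of_prodLang_eq h]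
    | star c => exact ((hM.2 _ mem_cons_self).ne_empty habs.symm).elim
  | star b =>
    cases y with
    | letter a => exact ((hL.2 _ mem_cons_self).ne_empty habs).elim
    | star c => exact congrArg Atom.star habs

/-- The tail of a reduced product is recovered from the product: after `letter a` by the left
quotient by `a`; after `star b`, as the words below those in the product that start outside `b`. -/
lemma Reduced.prodLang_le_of_prodLang_cons_eq {x : Atom A} {L M : List (Atom A)}
    (hL : Reduced (x :: L)) (h : prodLang (x :: L) = prodLang (x :: M)) :
    prodLang L ≤ prodLang M := by
  intro s hs
  cases x with
  | letter a =>
    exact mem_prodLang_of_notMem_absorbs (Set.notMem_empty a)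
      (h ▸ cons_mem_prodLang_of_mem_letters rfl hs)
  | star b =>
    cases L with
    | nil => rw [mem_prodLang_nil.1 hs]; exact nil_mem_prodLang M
    | cons y L =>
      obtain ⟨e, hey, heb⟩ := Set.not_subset.1 (isChain_cons_cons.1 hL.1).1.2
      obtain ⟨t, hst, ht⟩ := exists_sublist_cons_mem_prodLang hey hs
      exact mem_prodLang_of_sublist hst (cons_mem_prodLang_of_notMem_letters (x := .star b) heb
        (h ▸ mem_prodLang_cons_of_mem ht))

theorem Reduced.eq_of_prodLang_eq : ∀ {L M : List (Atom A)},
    Reduced L → Reduced M → prodLang L = prodLang M → L = M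
  | [], [], _, _, _ => rfl
  | [], _ :: _, _, hM, h => (hM.prodLang_ne_one h.symm).elim
  | _ :: _, [], hL, _, h => (hL.prodLang_ne_one h).elim
  | x :: L, y :: M, hL, hM, h => by
    obtain rfl := hL.head_eq_of_prodLang_eq hM h
    rw [eq_of_prodLang_eq hL.tail hM.tail (le_antisymm (hL.prodLang_le_of_prodLang_cons_eq h)
      (hM.prodLang_le_of_prodLang_cons_eq h.symm))]

lemma Atom.compatible_letter_letter (a b : A) : Compatible (letter a) (letter b) := by
  simp [Compatible, letters, absorbs]

lemma Atom.compatible_letter_star {a : A} {b : Set A} :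
    Compatible (letter a) (star b) ↔ a ∉ b ∧ b.Nonempty := by
  simp [Compatible, letters, absorbs, Set.nonempty_iff_ne_empty]

lemma Atom.compatible_star_letter {a : A} {b : Set A} :
    Compatible (star b) (letter a) ↔ b.Nonempty ∧ a ∉ b := by
  simp [Compatible, letters, absorbs, Set.nonempty_iff_ne_empty]

lemma mem_prodLang_map_letter {u s : List A} : s ∈ prodLang (u.map letter) ↔ s <+ u := by
  induction u generalizing s with
  | nil => simp [mem_prodLang_nil]
  | cons a u ih =>
    simp only [map_cons, mem_prodLang_cons, mem_lang_letter, sublist_cons_iff, ih]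
    constructor
    · rintro ⟨s₁, rfl | rfl, s₂, hs₂, rfl⟩
      · exact .inl hs₂
      · exact .inr ⟨s₂, rfl, hs₂⟩
    · rintro (hs | ⟨r, rfl, hr⟩)
      · exact ⟨[], .inl rfl, s, hs, rfl⟩
      · exact ⟨[a], .inr rfl, r, hr, rfl⟩

lemma mem_lang_star_of_mem_exactLang_pow {b : Set A} {n : ℕ} {z : List A}
    (hz : z ∈ exactLang b ^ n) : z ∈ (star b).lang := by
  induction n generalizing z with
  | zero => rw [pow_zero, Language.mem_one] at hz; simp [hz, mem_lang_star]
  | succ n ih =>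
    obtain ⟨z₁, hz₁, z₂, hz₂, rfl⟩ := Language.mem_mul.1 (pow_succ (exactLang b) n ▸ hz)
    exact forall_mem_append.2 ⟨ih hz₁, fun x hx => hz₂ ▸ hx⟩

/-- Each factor of a word of `(b!)ⁿ` contains every letter of `b`, so all words over `b` of length
at most `n` embed into it. -/
lemma sublist_of_mem_exactLang_pow {b : Set A} {n : ℕ} {z s : List A}
    (hz : z ∈ exactLang b ^ n) (hs : s ∈ (star b).lang) (hsn : s.length ≤ n) : s <+ z := by
  induction n generalizing z s with
  | zero => rw [eq_nil_of_length_eq_zero (Nat.le_zero.1 hsn)]; exact nil_sublist z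
  | succ n ih =>
    obtain ⟨z₁, hz₁, z₂, hz₂, rfl⟩ := Language.mem_mul.1 (pow_succ' (exactLang b) n ▸ hz)
    cases s with
    | nil => exact nil_sublist _
    | cons a s =>
      have ha : a ∈ z₁ := (hz₁ ▸ hs a mem_cons_self : a ∈ content z₁)
      obtain ⟨p, q, rfl⟩ := append_of_mem ha
      have hs' : s <+ z₂ := ih hz₂ (forall_mem_cons.1 hs).2 (Nat.le_of_succ_le_succ hsn)
      simpa using ((sublist_append_right p [a]).append (hs'.trans (sublist_append_right q z₂)))

lemma sublist_iff_mem_lang_star_of_mem_exactLang_pow {b : Set A} {n : ℕ} {z s : List A}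
    (hz : z ∈ exactLang b ^ n) (hs : s.length ≤ n) : s <+ z ↔ s ∈ (star b).lang :=
  ⟨fun h x hx => mem_lang_star_of_mem_exactLang_pow hz x (h.subset hx),
    fun h => sublist_of_mem_exactLang_pow hz h hs⟩

lemma sublist_append_iff_mem_mul {n : ℕ} {x y : List A} {K K' : Language A}
    (hx : ∀ s : List A, s.length ≤ n → (s <+ x ↔ s ∈ K))
    (hy : ∀ s : List A, s.length ≤ n → (s <+ y ↔ s ∈ K')) (s : List A) (hs : s.length ≤ n) :
    s <+ x ++ y ↔ s ∈ K * K' := by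
  rw [sublist_append_iff, Language.mem_mul]
  constructor
  · rintro ⟨s₁, s₂, rfl, h₁, h₂⟩
    rw [length_append] at hs
    exact ⟨s₁, (hx s₁ (by omega)).1 h₁, s₂, (hy s₂ (by omega)).1 h₂, rfl⟩
  · rintro ⟨s₁, h₁, s₂, h₂, rfl⟩
    rw [length_append] at hs
    exact ⟨s₁, s₂, rfl, (hx s₁ (by omega)).2 h₁, (hy s₂ (by omega)).2 h₂⟩

def atomize : List (List A) → List (Set A) → List (Atom A)
  | [u₀], [] => u₀.map letter
  | u₀ :: us, b :: bs => u₀.map letter ++ star b :: atomize us bs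
  | _, _ => []

lemma sublist_iff_mem_prodLang_atomize : ∀ {u : List (List A)} {B : List (Set A)} {n : ℕ}
    {v : List A}, v ∈ patternLang u B n →
    ∀ s : List A, s.length ≤ n → (s <+ v ↔ s ∈ prodLang (atomize u B))
  | [u₀], [], n, v, hv => fun s _ => by
    rw [show v = u₀ from hv, atomize, mem_prodLang_map_letter]
  | u₀ :: us, b :: bs, n, v, hv => by
    obtain ⟨_, ⟨_, rfl, z, hz, rfl⟩, v', hv', rfl⟩ := by
      simpa only [patternLang, Language.mem_mul] using hv
    rw [atomize, prodLang_append, prodLang_cons, append_assoc]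
    exact sublist_append_iff_mem_mul (fun s _ => mem_prodLang_map_letter.symm)
      (sublist_append_iff_mem_mul (fun s => sublist_iff_mem_lang_star_of_mem_exactLang_pow hz)
        (sublist_iff_mem_prodLang_atomize hv'))
  | [], _, _, _, hv => by simp [patternLang] at hv
  | _ :: _ :: _, [], _, _, hv => by simp [patternLang] at hv

def decode : List (Atom A) → List (List A) × List (Set A)
  | [] => ([[]], [])
  | .letter a :: L => ((decode L).1.modifyHead (a :: ·), (decode L).2)
  | .star b :: L => ([] :: (decode L).1, b :: (decode L).2)

lemma decode_map_letter_append (u₀ : List A) (L : List (Atom A)) :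
    decode (u₀.map letter ++ L) = ((decode L).1.modifyHead (u₀ ++ ·), (decode L).2) := by
  induction u₀ with
  | nil => rcases h : decode L with ⟨_ | _, _⟩ <;> simp [h]
  | cons a u₀ ih => rcases h : decode L with ⟨_ | _, _⟩ <;> simp [decode, ih, h]

lemma decode_atomize : ∀ {u : List (List A)} {B : List (Set A)},
    u.length = B.length + 1 → decode (atomize u B) = (u, B)
  | [u₀], [], _ => by
    rw [atomize, ← append_nil (u₀.map letter), decode_map_letter_append]; simp [decode]
  | u₀ :: us, b :: bs, hu => by
    simp [atomize, decode_map_letter_append, decode, decode_atomize (by simpa using hu)]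
  | [], _, hu | _ :: _ :: _, [], hu => by simp at hu

lemma atomize_injective {u t : List (List A)} {B C : List (Set A)}
    (hu : u.length = B.length + 1) (ht : t.length = C.length + 1)
    (h : atomize u B = atomize t C) : u = t ∧ B = C := by
  rw [← Prod.mk.injEq, ← decode_atomize hu, ← decode_atomize ht, h]

lemma _root_.Proper.of_cons {u₀ : List A} {us : List (List A)} {b : Set A} {bs : List (Set A)}
    (h : Proper (u₀ :: us) (b :: bs)) : Proper us bs :=
  ⟨fun i hi => h.1 (i + 1) (by simpa using hi), fun i hi => h.2.1 (i + 1) (by simpa using hi),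
    fun i hi => h.2.2 (i + 1) (by simpa using hi)⟩

lemma isChain_map_letter (u : List A) : (u.map letter).IsChain Compatible :=
  (isChain_map letter).2 (pairwise_of_forall compatible_letter_letter).isChain

lemma compatible_star_head?_atomize {b : Set A} {u₁ : List A} {us : List (List A)}
    {bs : List (Set A)} (hb : b.Nonempty) (hu₁ : ∀ a ∈ u₁.head?, a ∉ b)
    (hbs : ∀ c cs, bs = c :: cs → u₁ = [] → ¬ b ⊆ c ∧ ¬ c ⊆ b) :
    ∀ y ∈ (atomize (u₁ :: us) bs).head?, Compatible (star b) y := by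
  cases u₁ with
  | cons a u₁ =>
    cases us <;> cases bs <;>
      simp_all [atomize, compatible_star_letter]
  | nil =>
    cases us <;> cases bs <;> simp_all [atomize, Compatible, letters, absorbs]

lemma isChain_atomize : ∀ {u : List (List A)} {B : List (Set A)},
    u.length = B.length + 1 → (∀ b ∈ B, b.Nonempty) → Proper u B →
    (atomize u B).IsChain Compatible
  | [u₀], [], _, _, _ => isChain_map_letter u₀
  | u₀ :: u₁ :: us, b :: bs, hu, hB, hP => by
    have hb := hB b mem_cons_self
    rw [atomize, isChain_append, isChain_cons]
    refine ⟨isChain_map_letter u₀,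
      ⟨compatible_star_head?_atomize hb (fun a ha => hP.2.1 0 (by simp) a ha)
        (fun c cs hbs h₁ => by subst hbs; simpa using hP.2.2 0 (by simp) (by simpa using h₁)),
      isChain_atomize (by simpa using hu) (fun c hc => hB c (mem_cons_of_mem b hc)) hP.of_cons⟩, ?_⟩
    rintro _ hx y hy
    obtain ⟨a, ha, rfl⟩ := Option.mem_map.1 (getLast?_map ▸ hx)
    obtain rfl : y = star b := (Option.mem_some_iff.1 hy).symm
    exact compatible_letter_star.2 ⟨hP.1 0 (by simp) a ha, hb⟩
  | [], _, hu, _, _ | _ :: _ :: _, [], hu, _, _ | [_], _ :: _, hu, _, _ => by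
    simp at hu

lemma letters_nonempty_of_mem_atomize : ∀ {u : List (List A)} {B : List (Set A)},
    (∀ b ∈ B, b.Nonempty) → ∀ x ∈ atomize u B, x.letters.Nonempty
  | [u₀], [], _, x, hx => by
    obtain ⟨a, -, rfl⟩ := mem_map.1 hx
    exact Set.singleton_nonempty a
  | u₀ :: us, b :: bs, hB, x, hx => by
    rw [atomize, mem_append, mem_cons] at hx
    rcases hx with hx | rfl | hx
    · obtain ⟨a, -, rfl⟩ := mem_map.1 hx
      exact Set.singleton_nonempty a
    · exact hB b mem_cons_self
    · exact letters_nonempty_of_mem_atomize (fun c hc => hB c (mem_cons_of_mem b hc)) x hx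
  | [], _, _, x, hx | _ :: _ :: _, [], _, x, hx => by simp [atomize] at hx

lemma reduced_atomize {u : List (List A)} {B : List (Set A)} (hu : u.length = B.length + 1)
    (hB : ∀ b ∈ B, b.Nonempty) (hP : Proper u B) : Reduced (atomize u B) :=
  ⟨isChain_atomize hu hB hP, letters_nonempty_of_mem_atomize hB⟩

lemma sublist_iff_of_simn {n : ℕ} {v w s : List A} (h : simn n v w) (hs : s.length ≤ n) :
    s <+ v ↔ s <+ w := by
  have := Set.ext_iff.1 h s
  simp_all [Subw]

lemma prodLang_atomize_eq_of_simn {u t : List (List A)} {B C : List (Set A)} {v w : ℕ → List A}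
    (hv : ∀ n, v n ∈ patternLang u B n) (hw : ∀ n, w n ∈ patternLang t C n)
    (hvw : ∀ n, simn n (v n) (w n)) : prodLang (atomize u B) = prodLang (atomize t C) := by
  ext s
  rw [← sublist_iff_mem_prodLang_atomize (hv s.length) s le_rfl,
    ← sublist_iff_mem_prodLang_atomize (hw s.length) s le_rfl]
  exact sublist_iff_of_simn (hvw s.length) le_rfl

end FactorizationPattern

/-- two proper factorization patterns with `∼ₙ`-related adequate
sequences coincide. -/
theorem proper_patterns_unique {A : Type*}
    (u t : List (List A)) (B C : List (Set A))
    (hu : u.length = B.length + 1) (ht : t.length = C.length + 1)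
    (hBne : ∀ b ∈ B, b.Nonempty) (hCne : ∀ c ∈ C, c.Nonempty)
    (hPB : Proper u B) (hPC : Proper t C)
    (v w : ℕ → List A)
    (hv : ∀ n, v n ∈ patternLang u B n)
    (hw : ∀ n, w n ∈ patternLang t C n)
    (hvw : ∀ n, simn n (v n) (w n)) :
    u = t ∧ B = C := by
  open FactorizationPattern in
  exact atomize_injective hu ht ((reduced_atomize hu hBne hPB).eq_of_prodLang_eq
    (reduced_atomize ht hCne hPC) (prodLang_atomize_eq_of_simn hv hw hvw))
end

section
/- Let A be a nondeterministic finite automaton with state set Q. If L(A) contains, for every n, a word of the form u₀y₁ⁿu₁⋯u_{p−1}y_pⁿu_p with c(yᵢ) = Bᵢ (i.e., L(A) meets u₀(B₁!)ⁿ⋯u_p for all n), then there is an accepting run of A of the form: read u₀, then a path using only letters of B₁ that contains a loop traversing each letter of B₁, then u₁, …, then a path in B_p with a loop using every letter of B_p, then u_p. (Existence of a (u⃗,B⃗)-path.) -/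
/-- a `(⊆B)`-path from `p` to `q`: all transitions labeled by letters of `B`. -/
def SubPath {A σ : Type*} (M : NFA A σ) (B : Set A) (p q : σ) : Prop :=
  ∃ w : List A, (∀ a ∈ w, a ∈ B) ∧ q ∈ M.evalFrom {p} w

/-- an `(=B)`-loop around `q`: a cycle labeled by a word of content exactly `B`. -/
def EqLoop {A σ : Type*} (M : NFA A σ) (B : Set A) (q : σ) : Prop :=
  ∃ w : List A, content w = B ∧ q ∈ M.evalFrom {q} w

/-- a `(u⃗, B⃗)`-path starting at state `p`: read `u₀`, then a `(⊆B₁)`-path through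
a state carrying an `(=B₁)`-loop, then `u₁`, …, ending in an accepting state. -/
def UBPath {A σ : Type*} (M : NFA A σ) : List (List A) → List (Set A) → σ → Prop
  | [u0], [], p => ∃ f ∈ M.accept, f ∈ M.evalFrom {p} u0
  | u0 :: us, b :: bs, p => ∃ q1 q2 q3 : σ, q1 ∈ M.evalFrom {p} u0 ∧
      SubPath M b q1 q2 ∧ EqLoop M b q2 ∧ SubPath M b q2 q3 ∧ UBPath M us bs q3
  | _, _, _ => False

/-! On a word of `u₀(B₁!)ⁿu₁⋯(B_p!)ⁿu_p` with `n ≥ |Q|`, an accepting run visits, inside each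
block `(Bᵢ!)ⁿ`, `n + 1` factor boundaries. Two of them carry the same state, and the factors read
between them form an `(=Bᵢ)`-loop, because each factor has content exactly `Bᵢ`. -/

namespace Relation

variable {α : Type*} {r : α → α → Prop}

theorem exists_transGen_self_of_chain [Fintype α] {g : ℕ → α} {n : ℕ}
    (hn : Fintype.card α ≤ n) (hg : ∀ i < n, r (g i) (g (i + 1))) :
    ∃ q, ReflTransGen r (g 0) q ∧ TransGen r q q ∧ ReflTransGen r q (g n) := by
  have hchain : ∀ i ∈ Set.Ico 0 n, (fun i j => r (g i) (g j)) i (Order.succ i) :=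
    fun i hi => hg i hi.2
  have segment : ∀ {i j}, i ≤ j → j ≤ n → ReflTransGen r (g i) (g j) := fun hij hjn =>
    (reflTransGen_of_succ_of_le (fun i j => r (g i) (g j))
      (fun k hk => hchain k ⟨Nat.zero_le k, hk.2.trans_le hjn⟩) hij).lift g fun _ _ => id
  obtain ⟨i, j, hij, hgij⟩ := Fintype.exists_ne_map_eq_of_card_lt (fun i : Fin (n + 1) => g i)
    (by simpa using Nat.lt_succ_of_le hn)
  wlog hlt : i < j generalizing i j
  · exact this j i hij.symm hgij.symm (lt_of_le_of_ne (not_lt.1 hlt) hij.symm)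
  refine ⟨g i, segment (Nat.zero_le i) (by omega), ?_, segment (by omega) le_rfl⟩
  have hloop : TransGen r (g i) (g j) := (transGen_of_succ_of_lt (fun i j => r (g i) (g j))
    (fun k hk => hchain k ⟨Nat.zero_le k, hk.2.trans_le (by omega)⟩) hlt).lift g fun _ _ => id
  rwa [← hgij] at hloop

end Relation

theorem content_append {A : Type*} (x y : List A) : content (x ++ y) = content x ∪ content y := by
  ext a
  simp [content]

theorem NFA.mem_evalFrom_append_iff {A σ : Type*} {M : NFA A σ} {S : Set σ} {r : σ}
    {x y : List A} : r ∈ M.evalFrom S (x ++ y) ↔ ∃ q ∈ M.evalFrom S x, r ∈ M.evalFrom {q} y := by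
  rw [NFA.evalFrom_append, NFA.mem_evalFrom_iff_exists]

section Paths

variable {A σ : Type*} (M : NFA A σ)

def EqStep (B : Set A) (p q : σ) : Prop :=
  ∃ w : List A, content w = B ∧ q ∈ M.evalFrom {p} w

variable {M} {B : Set A}

theorem EqStep.trans {p q r : σ} : EqStep M B p q → EqStep M B q r → EqStep M B p r
  | ⟨x, hx, hpq⟩, ⟨y, hy, hqr⟩ =>
    ⟨x ++ y, by rw [content_append, hx, hy, Set.union_self],
      NFA.mem_evalFrom_append_iff.2 ⟨q, hpq, hqr⟩⟩

theorem SubPath.refl (p : σ) : SubPath M B p p := ⟨[], by simp, by simp⟩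

theorem SubPath.trans {p q r : σ} : SubPath M B p q → SubPath M B q r → SubPath M B p r
  | ⟨x, hx, hpq⟩, ⟨y, hy, hqr⟩ =>
    ⟨x ++ y, by simpa using fun a ha => ha.elim (hx a) (hy a),
      NFA.mem_evalFrom_append_iff.2 ⟨q, hpq, hqr⟩⟩

theorem EqStep.subPath {p q : σ} : EqStep M B p q → SubPath M B p q
  | ⟨w, hw, hpq⟩ => ⟨w, fun _ ha => hw ▸ ha, hpq⟩

theorem eqStep_of_transGen {p q : σ} (h : Relation.TransGen (EqStep M B) p q) :
    EqStep M B p q := by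
  induction h with
  | single h => exact h
  | tail _ h ih => exact ih.trans h

theorem subPath_of_reflTransGen {p q : σ} (h : Relation.ReflTransGen (EqStep M B) p q) :
    SubPath M B p q := by
  induction h with
  | refl => exact SubPath.refl p
  | tail _ h ih => exact ih.trans h.subPath

theorem exists_eqStep_chain_of_mem_pow {n : ℕ} {w : List A} (hw : w ∈ exactLang B ^ n)
    {p q : σ} (hpq : q ∈ M.evalFrom {p} w) :
    ∃ g : ℕ → σ, g 0 = p ∧ g n = q ∧ ∀ i < n, EqStep M B (g i) (g (i + 1)) := by
  induction n generalizing w p with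
  | zero =>
    obtain rfl : w = [] := hw
    exact ⟨fun _ => p, rfl, by simpa [eq_comm] using hpq, fun i hi => absurd hi i.not_lt_zero⟩
  | succ n ih =>
    rw [pow_succ', Language.mem_mul] at hw
    obtain ⟨x, hx, y, hy, rfl⟩ := hw
    obtain ⟨p', hp', hq⟩ := NFA.mem_evalFrom_append_iff.1 hpq
    obtain ⟨g, hg0, hgn, hg⟩ := ih hy hq
    refine ⟨fun | 0 => p | i + 1 => g i, rfl, hgn, ?_⟩
    rintro (_ | i) hi
    · exact ⟨x, hx, by simpa [hg0] using hp'⟩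
    · exact hg i (by omega)

theorem exists_eqLoop_of_mem_pow [Fintype σ] {n : ℕ} (hn : Fintype.card σ ≤ n) {w : List A}
    (hw : w ∈ exactLang B ^ n) {p q : σ} (hpq : q ∈ M.evalFrom {p} w) :
    ∃ r, SubPath M B p r ∧ EqLoop M B r ∧ SubPath M B r q := by
  obtain ⟨g, rfl, rfl, hg⟩ := exists_eqStep_chain_of_mem_pow hw hpq
  obtain ⟨r, hpr, hrr, hrq⟩ := Relation.exists_transGen_self_of_chain hn hg
  exact ⟨r, subPath_of_reflTransGen hpr, eqStep_of_transGen hrr, subPath_of_reflTransGen hrq⟩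

end Paths

theorem ubPath_of_mem_patternLang {A σ : Type*} [Fintype σ] {M : NFA A σ} {n : ℕ}
    (hn : Fintype.card σ ≤ n) {u : List (List A)} {B : List (Set A)} {w : List A}
    (hw : w ∈ patternLang u B n) {p f : σ} (hf : f ∈ M.accept) (hpf : f ∈ M.evalFrom {p} w) :
    UBPath M u B p := by
  induction u, B, n using patternLang.induct generalizing w p with
  | case1 u₀ =>
    obtain rfl : w = u₀ := hw
    exact ⟨f, hf, hpf⟩
  | case2 u₀ us b bs n ih =>
    rw [patternLang, Language.mem_mul] at hw
    obtain ⟨_, hx, y, hy, rfl⟩ := hw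
    obtain ⟨_, rfl, v, hv, rfl⟩ := Language.mem_mul.1 hx
    obtain ⟨q₃, hq₃, hf₃⟩ := NFA.mem_evalFrom_append_iff.1 hpf
    obtain ⟨q₁, hq₁, hq₁₃⟩ := NFA.mem_evalFrom_append_iff.1 hq₃
    obtain ⟨q₂, h₁₂, hloop, h₂₃⟩ := exists_eqLoop_of_mem_pow hn hv hq₁₃
    rw [UBPath]
    exact ⟨q₁, q₂, q₃, hq₁, h₁₂, hloop, h₂₃, ih hn hy hf₃⟩
  | case3 u B n hne₁ hne₂ =>
    rw [patternLang.eq_3 u B n hne₁ hne₂] at hw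
    exact absurd hw (Language.notMem_zero w)

theorem exists_ub_path_general {A σ : Type*} [Fintype σ] (M : NFA A σ)
    (u : List (List A)) (B : List (Set A))
    (h : ∀ n, ∃ w ∈ patternLang u B n, w ∈ M.accepts) :
    ∃ s ∈ M.start, UBPath M u B s := by
  obtain ⟨w, hw, hacc⟩ := h (Fintype.card σ)
  obtain ⟨f, hf, hfw⟩ := M.mem_accepts.1 hacc
  obtain ⟨s, hs, hsf⟩ := NFA.mem_evalFrom_iff_exists.1 hfw
  exact ⟨s, hs, ubPath_of_mem_patternLang le_rfl hw hf hsf⟩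

/-- if `L(M)` meets `u₀(B₁!)ⁿu₁⋯(B_p!)ⁿu_p` for every `n`, then `M`
admits a `(u⃗, B⃗)`-path (from some initial state to an accepting state). -/
theorem exists_ub_path {A σ : Type*} [Fintype σ] (M : NFA A σ)
    (u : List (List A)) (B : List (Set A))
    (hu : u.length = B.length + 1) (hBne : ∀ b ∈ B, b.Nonempty)
    (h : ∀ n, ∃ w ∈ patternLang u B n, w ∈ M.accepts) :
    ∃ s ∈ M.start, UBPath M u B s :=
  exists_ub_path_general M u B h
end

section
/- Correctness of the 3-SAT reduction: let φ be a 3-CNF formula over variables x₁,…,xₙ with clauses C₁,…,C_k, and let A be the alphabet of the 2n literals. Let L₁ = {y₁⋯yₙ : each yᵢ ∈ {xᵢ, ¬xᵢ}} and L₂ = {w₁⋯w_k u : u ∈ L₁ and each wᵢ is a literal of clause Cᵢ}. Then φ is satisfiable if and only if there exist u ∈ L₁ and v ∈ L₂ with c(u) = c(v). -/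
/-- A literal over variables `Fin nv` is a pair (variable, polarity). -/
abbrev Lit (nv : ℕ) := Fin nv × Bool

/-- a valuation `f` makes a literal true -/
def litTrue {nv : ℕ} (f : Fin nv → Bool) (l : Lit nv) : Prop := f l.1 = l.2

/-- words encoding valuations: `y₁⋯yₙ` with `yᵢ ∈ {xᵢ, ¬xᵢ}` -/
def L₁ (nv : ℕ) : Set (List (Lit nv)) :=
  {w | ∃ f : Fin nv → Bool, w = List.ofFn fun i => (i, f i)}

/-- words `w₁⋯w_k u` with `u ∈ L₁` and each `wᵢ` a literal of the `i`-th clause -/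
def L₂ {nv : ℕ} (clauses : List (List (Lit nv))) : Set (List (Lit nv)) :=
  {w | ∃ g : Fin clauses.length → Lit nv, (∀ j, g j ∈ clauses.get j) ∧
    ∃ u ∈ L₁ nv, w = (List.ofFn g) ++ u}

/-! A satisfying valuation `f` gives `c(u) = c(v)` by taking `u` the word of `f` and `v` a choice
of one true literal per clause followed by the same word. Conversely, since the word of a
valuation contains exactly one literal per variable, equal content forces the suffix of `v` to be
`u` itself, and then every chosen literal of `v` occurs in `u`, i.e. is true under the valuation
encoded by `u`. -/

theorem forall_mem_exists_mem_iff_exists_selection {α : Type*} (Ls : List (List α))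
    (p : α → Prop) :
    (∀ C ∈ Ls, ∃ l ∈ C, p l) ↔ ∃ g : Fin Ls.length → α, ∀ j, g j ∈ Ls.get j ∧ p (g j) := by
  constructor
  · intro h
    choose g hg using fun j : Fin Ls.length => h _ (List.get_mem Ls j)
    exact ⟨g, hg⟩
  · rintro ⟨g, hg⟩ C hC
    obtain ⟨j, rfl⟩ := List.mem_iff_get.1 hC
    exact ⟨g j, hg j⟩

theorem content_append_eq_right_iff {A : Type*} (w u : List A) :
    content (w ++ u) = content u ↔ w ⊆ u := by
  simp only [content, Set.ext_iff, Set.mem_ofPred_eq, List.mem_append, or_iff_right_iff_imp]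
  rfl

def valuationWord {nv : ℕ} (f : Fin nv → Bool) : List (Lit nv) :=
  List.ofFn fun i => (i, f i)

theorem mem_valuationWord_iff {nv : ℕ} (f : Fin nv → Bool) (l : Lit nv) :
    l ∈ valuationWord f ↔ litTrue f l := by
  obtain ⟨i, b⟩ := l
  simp [valuationWord, litTrue, List.mem_ofFn]

theorem eq_of_content_valuationWord_subset {nv : ℕ} {f f' : Fin nv → Bool}
    (h : content (valuationWord f') ⊆ content (valuationWord f)) : f' = f :=
  funext fun i =>
    ((mem_valuationWord_iff f _).1 (h ((mem_valuationWord_iff f' (i, f' i)).2 rfl))).symm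

theorem content_valuationWord_eq_iff {nv : ℕ} {f f' : Fin nv → Bool} {k : ℕ}
    {g : Fin k → Lit nv} :
    content (valuationWord f) = content (List.ofFn g ++ valuationWord f') ↔
      f' = f ∧ ∀ j, litTrue f (g j) := by
  have hsubset : ∀ {f : Fin nv → Bool},
      List.ofFn g ⊆ valuationWord f ↔ ∀ j, litTrue f (g j) := by
    simp only [List.subset_def, List.forall_mem_ofFn_iff, mem_valuationWord_iff,
      implies_true]
  constructor
  · intro h
    obtain rfl : f' = f :=
      eq_of_content_valuationWord_subset (h ▸ fun l hl => List.mem_append_right _ hl)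
    exact ⟨rfl, hsubset.1 ((content_append_eq_right_iff _ _).1 h.symm)⟩
  · rintro ⟨rfl, hg⟩
    exact ((content_append_eq_right_iff _ _).2 (hsubset.2 hg)).symm

theorem sat_reduction_correct_general {nv : ℕ} (clauses : List (List (Lit nv))) :
    (∃ f : Fin nv → Bool, ∀ C ∈ clauses, ∃ l ∈ C, litTrue f l) ↔
    (∃ u ∈ L₁ nv, ∃ v ∈ L₂ clauses, content u = content v) := by
  simp only [forall_mem_exists_mem_iff_exists_selection]
  constructor
  · rintro ⟨f, g, hg⟩
    exact ⟨valuationWord f, ⟨f, rfl⟩, List.ofFn g ++ valuationWord f,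
      ⟨g, fun j => (hg j).1, _, ⟨f, rfl⟩, rfl⟩,
      content_valuationWord_eq_iff.2 ⟨rfl, fun j => (hg j).2⟩⟩
  · rintro ⟨_, ⟨f, rfl⟩, _, ⟨g, hg, _, ⟨f', rfl⟩, rfl⟩, hc⟩
    obtain ⟨rfl, htrue⟩ := content_valuationWord_eq_iff.1 hc
    exact ⟨f', g, fun j => ⟨hg j, htrue j⟩⟩

/-- correctness of the 3-SAT reduction: `φ` is satisfiable iff
there are `u ∈ L₁` and `v ∈ L₂` with the same content. -/
theorem sat_reduction_correct {nv : ℕ} (clauses : List (List (Lit nv)))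
    (h3 : ∀ C ∈ clauses, C.length = 3) :
    (∃ f : Fin nv → Bool, ∀ C ∈ clauses, ∃ l ∈ C, litTrue f l) ↔
    (∃ u ∈ L₁ nv, ∃ v ∈ L₂ clauses, content u = content v) :=
  sat_reduction_correct_general clauses
end
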